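/- Let α ∈ ℝ, p ∈ ℂ, r > 0, and let u be analytic on the punctured disc {z ∈ ℂ : 0 < |z − p| < r} and satisfy u''(z) = 2u(z)³ + z·u(z) − α there, with a simple pole at p of residue +1, i.e. (z − p)·u(z) → 1 as z → p. Then the function f(z) := 2u(z)² − 2u'(z) + z has a double pole at p with leading coefficient 4; that is, (z − p)²·f(z) → 4 as z → p. In particular, f(z) ≠ 0 for all z sufficiently close to p, and along the real axis f(x) → +∞ as x → p (when p ∈ ℝ and u is real on the real axis). -/

import Mathlib

open Filter Topology Set Metric

/-- The auxiliary function `f(z) = 2 u(z)^2 - 2 u'(z) + z` appearing in the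
Bäcklund transformation for Painlevé II, in the complex setting. -/
noncomputable def piiFC (u : ℂ → ℂ) : ℂ → ℂ :=
  fun z => 2 * (u z) ^ 2 - 2 * deriv u z + z

/-!
Since `(z - p) u(z) → 1`, the function `(z - p) u(z)` has a removable singularity at `p`, so its
derivative `u + (z - p) u'` stays bounded near `p`. Hence `(z - p)² u'(z) → -1`, and
`(z - p)² f(z) = 2 ((z - p) u)² - 2 (z - p)² u' + (z - p)² z → 2 + 2 = 4`. On the real axis
`(x - p)²` is positive, so `Re f(x)` behaves like `4 / (x - p)² → +∞`.
-/

namespace Complex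

variable {E : Type*} [NormedAddCommGroup E] [NormedSpace ℂ E] [CompleteSpace E]

theorem tendsto_sub_smul_deriv_nhdsNE {f : ℂ → E} {c : ℂ} {a : E}
    (hd : ∀ᶠ z in 𝓝[≠] c, DifferentiableAt ℂ f z) (hf : Tendsto f (𝓝[≠] c) (𝓝 a)) :
    Tendsto (fun z => (z - c) • deriv f z) (𝓝[≠] c) (𝓝 0) := by
  set g := Function.update f c a
  have hgf : ∀ z ≠ c, g =ᶠ[𝓝 z] f := fun z hz =>
    (isOpen_ne.eventually_mem hz).mono fun w hw => Function.update_of_ne hw _ _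
  have hg : AnalyticAt ℂ g c :=
    analyticAt_of_differentiable_on_punctured_nhds_of_continuousAt
      (hd.mp <| eventually_nhdsWithin_of_forall fun z hz hfz =>
        hfz.congr_of_eventuallyEq (hgf z hz))
      (continuousAt_update_same.2 hf)
  have hlim : Tendsto (fun z => (z - c) • deriv g z) (𝓝 c) (𝓝 0) := by
    simpa using (tendsto_id.sub_const c).smul hg.deriv.continuousAt.tendsto
  exact (tendsto_nhdsWithin_of_tendsto_nhds hlim).congr' <|
    eventually_nhdsWithin_of_forall fun z hz => by rw [(hgf z hz).deriv_eq]

theorem tendsto_sub_sq_smul_deriv_nhdsNE {u : ℂ → E} {c : ℂ} {a : E}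
    (hd : ∀ᶠ z in 𝓝[≠] c, DifferentiableAt ℂ u z)
    (hu : Tendsto (fun z => (z - c) • u z) (𝓝[≠] c) (𝓝 a)) :
    Tendsto (fun z => (z - c) ^ 2 • deriv u z) (𝓝[≠] c) (𝓝 (-a)) := by
  have hF : ∀ᶠ z in 𝓝[≠] c,
      HasDerivAt (fun w => (w - c) • u w) ((z - c) • deriv u z + u z) z :=
    hd.mono fun z hz => by
      simpa using ((hasDerivAt_id z).sub_const c).fun_smul hz.hasDerivAt
  -- `(z - c)² u' = (z - c) ((z - c) u)' - (z - c) u`, and the first term tends to `0`.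
  have hlim :=
    (tendsto_sub_smul_deriv_nhdsNE (hF.mono fun z hz => hz.differentiableAt) hu).sub hu
  rw [zero_sub] at hlim
  refine hlim.congr' (hF.mono fun z hz => ?_)
  rw [hz.deriv, smul_add, smul_smul, add_sub_cancel_right, ← sq]

end Complex

theorem tendsto_sub_sq_mul_piiFC {u : ℂ → ℂ} {p a : ℂ}
    (hd : ∀ᶠ z in 𝓝[≠] p, DifferentiableAt ℂ u z)
    (hu : Tendsto (fun z => (z - p) * u z) (𝓝[≠] p) (𝓝 a)) :
    Tendsto (fun z => (z - p) ^ 2 * piiFC u z) (𝓝[≠] p) (𝓝 (2 * a ^ 2 + 2 * a)) := by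
  have hderiv := Complex.tendsto_sub_sq_smul_deriv_nhdsNE hd hu
  have hz : Tendsto (fun z => (z - p) ^ 2 * z) (𝓝[≠] p) (𝓝 0) :=
    tendsto_nhdsWithin_of_tendsto_nhds <| Continuous.tendsto' (by fun_prop) p 0 (by simp)
  have hlim := (((hu.pow 2).const_mul 2).sub (hderiv.const_mul 2)).add hz
  simp only [smul_eq_mul] at hlim
  convert hlim using 2
  · simp only [piiFC]
    ring
  · ring

theorem tendsto_re_atTop_of_tendsto_sub_sq_mul {F : ℂ → ℂ} {x : ℝ} {a : ℂ} (ha : 0 < a.re)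
    (h : Tendsto (fun z => (z - x) ^ 2 * F z) (𝓝[≠] (x : ℂ)) (𝓝 a)) :
    Tendsto (fun t : ℝ => (F t).re) (𝓝[≠] x) atTop := by
  have hofReal : Tendsto ((↑) : ℝ → ℂ) (𝓝[≠] x) (𝓝[≠] (x : ℂ)) :=
    Complex.continuous_ofReal.continuousWithinAt.tendsto_nhdsWithin fun _ _ => by simp_all
  have hre : Tendsto (fun t : ℝ => (t - x) ^ 2 * (F t).re) (𝓝[≠] x) (𝓝 a.re) := by
    convert (Complex.continuous_re.tendsto a).comp (h.comp hofReal) using 2 with t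
    simp only [Function.comp_apply, ← Complex.ofReal_sub, ← Complex.ofReal_pow,
      Complex.re_ofReal_mul]
  have hinv : Tendsto (fun t : ℝ => ((t - x) ^ 2)⁻¹) (𝓝[≠] x) atTop := by
    convert (tendsto_pow_atTop two_ne_zero).comp
      (tendsto_norm_sub_self_nhdsNE x).inv_tendsto_nhdsGT_zero using 2 with t
    simp [inv_pow]
  refine (hre.pos_mul_atTop ha hinv).congr' (eventually_nhdsWithin_of_forall fun t ht => ?_)
  rw [mul_comm, inv_mul_cancel_left₀ (pow_ne_zero 2 (sub_ne_zero.2 ht))]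

theorem piiFC_double_pole_general (p : ℂ) (r : ℝ) (hr : 0 < r)
    (u : ℂ → ℂ) (hu : AnalyticOnNhd ℂ u (ball p r \ {p}))
    (hpole : Tendsto (fun z => (z - p) * u z) (𝓝[≠] p) (𝓝 1)) :
    Tendsto (fun z => (z - p) ^ 2 * piiFC u z) (𝓝[≠] p) (𝓝 4) ∧
    (∀ᶠ z in 𝓝[≠] p, piiFC u z ≠ 0) ∧
    (p.im = 0 → (∀ x : ℝ, (x : ℂ) ∈ ball p r \ {p} → (u (x : ℂ)).im = 0) →
      Tendsto (fun x : ℝ => (piiFC u (x : ℂ)).re) (𝓝[≠] p.re) atTop) := by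
  have hd : ∀ᶠ z in 𝓝[≠] p, DifferentiableAt ℂ u z :=
    eventually_of_mem (sdiff_mem_nhdsWithin_compl (ball_mem_nhds p hr) {p}) fun z hz =>
      (hu z hz).differentiableAt
  have hlim : Tendsto (fun z => (z - p) ^ 2 * piiFC u z) (𝓝[≠] p) (𝓝 4) := by
    convert tendsto_sub_sq_mul_piiFC hd hpole using 2
    norm_num
  refine ⟨hlim, (hlim.eventually_ne (by norm_num)).mono fun z hz => right_ne_zero_of_mul hz,
    fun hp _ => ?_⟩
  obtain ⟨x, rfl⟩ : ∃ x : ℝ, (x : ℂ) = p := ⟨p.re, Complex.ext rfl (by simp [hp])⟩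
  simpa using tendsto_re_atTop_of_tendsto_sub_sq_mul (by norm_num) hlim

/-- if `u` solves Painlevé II on a punctured disc around `p`
with a simple pole of residue `+1` at `p`, then `f = 2 u^2 - 2 u' + z` has a
double pole at `p` with leading coefficient `4`: `(z-p)^2 f(z) → 4`.  In
particular `f` is nonvanishing near `p`, and if `p` is real and `u` is real
on the real axis then `f(x) → +∞` as `x → p` along the reals. -/
theorem piiFC_double_pole (α : ℝ) (p : ℂ) (r : ℝ) (hr : 0 < r)
    (u : ℂ → ℂ) (hu : AnalyticOnNhd ℂ u (ball p r \ {p}))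
    (hPII : ∀ z ∈ ball p r \ {p},
      deriv (deriv u) z = 2 * (u z) ^ 3 + z * u z - (α : ℂ))
    (hpole : Tendsto (fun z => (z - p) * u z) (𝓝[≠] p) (𝓝 1)) :
    Tendsto (fun z => (z - p) ^ 2 * piiFC u z) (𝓝[≠] p) (𝓝 4) ∧
    (∀ᶠ z in 𝓝[≠] p, piiFC u z ≠ 0) ∧
    (p.im = 0 → (∀ x : ℝ, (x : ℂ) ∈ ball p r \ {p} → (u (x : ℂ)).im = 0) →
      Tendsto (fun x : ℝ => (piiFC u (x : ℂ)).re) (𝓝[≠] p.re) atTop) :=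
  piiFC_double_pole_general p r hr u hu hpole
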